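/- arXiv:1809.06368 — 8 statements merged into one kernel-verified Lean document; each statement's English description precedes it below -/
import Mathlib

section
/- The plasma dispersion function satisfies the derivative identity Z′(ζ) = −2(1 + ζ Z(ζ)): the function Z is complex differentiable at every ζ in the open upper half plane {Im ζ > 0}, and its derivative there equals −2(1 + ζ Z(ζ)). -/
/-!
Differentiating under the integral sign, with the Gaussian as a dominating function on a disc
that stays away from the real axis, gives `Z'(ζ) = π^{-1/2} ∫ e^{-x²}/(x - ζ)² dx`. Integrating
`d/dx [e^{-x²}/(x - ζ)] = -2e^{-x²} - 2ζ e^{-x²}/(x - ζ) - e^{-x²}/(x - ζ)²` over `ℝ`, where the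
bracket vanishes at `±∞`, turns this into `-2π^{-1/2}(√π + ζ ∫ e^{-x²}/(x - ζ) dx) = -2(1 + ζ Z(ζ))`.
-/

open MeasureTheory

/-- The plasma dispersion function `Z(ζ) = π^{−1/2} ∫_ℝ e^{−x²}/(x − ζ) dx`. -/
noncomputable def plasmaZ (ζ : ℂ) : ℂ :=
  (Real.sqrt Real.pi : ℂ)⁻¹ * ∫ x : ℝ, Complex.exp (-(x : ℂ) ^ 2) / ((x : ℂ) - ζ)

open Complex Filter Metric Real Topology

lemma abs_im_le_norm_ofReal_sub (z : ℂ) (x : ℝ) : |z.im| ≤ ‖(x : ℂ) - z‖ := by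
  simpa using abs_im_le_norm ((x : ℂ) - z)

lemma abs_im_sub_le_abs_im_of_mem_ball {ζ z : ℂ} {r : ℝ} (hz : z ∈ ball ζ r) :
    |ζ.im| - r ≤ |z.im| := by
  have h : |ζ.im - z.im| ≤ ‖ζ - z‖ := by simpa using abs_im_le_norm (ζ - z)
  rw [mem_ball, Complex.dist_eq, norm_sub_rev] at hz
  linarith [abs_sub_abs_le_abs_sub ζ.im z.im]

lemma ofReal_sub_ne_zero_of_im_ne_zero {z : ℂ} (hz : z.im ≠ 0) (x : ℝ) : (x : ℂ) - z ≠ 0 :=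
  norm_pos_iff.mp ((abs_pos.mpr hz).trans_le (abs_im_le_norm_ofReal_sub z x))

lemma norm_cexp_neg_sq (x : ℝ) : ‖cexp (-(x : ℂ) ^ 2)‖ = rexp (-x ^ 2) := by
  rw [norm_exp]
  norm_cast

lemma norm_cexp_neg_sq_div_pow_le {z : ℂ} {c : ℝ} (hc : 0 < c) (hcz : c ≤ |z.im|) (x : ℝ)
    (n : ℕ) : ‖cexp (-(x : ℂ) ^ 2) / ((x : ℂ) - z) ^ n‖ ≤ (c ^ n)⁻¹ * rexp (-x ^ 2) := by
  rw [norm_div, norm_cexp_neg_sq, norm_pow, div_eq_mul_inv, mul_comm]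
  gcongr
  exact hcz.trans (abs_im_le_norm_ofReal_sub z x)

lemma integrable_exp_neg_sq : Integrable fun x : ℝ => rexp (-x ^ 2) := by
  simpa using integrable_exp_neg_mul_sq one_pos

lemma continuous_cexp_neg_sq_div_pow {z : ℂ} (hz : z.im ≠ 0) (n : ℕ) :
    Continuous fun x : ℝ => cexp (-(x : ℂ) ^ 2) / ((x : ℂ) - z) ^ n :=
  .div (by fun_prop) (by fun_prop) fun x => pow_ne_zero n (ofReal_sub_ne_zero_of_im_ne_zero hz x)

lemma integrable_cexp_neg_sq_div_pow {z : ℂ} (hz : z.im ≠ 0) (n : ℕ) :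
    Integrable fun x : ℝ => cexp (-(x : ℂ) ^ 2) / ((x : ℂ) - z) ^ n := by
  refine Integrable.mono' (integrable_exp_neg_sq.const_mul (|z.im| ^ n)⁻¹)
    (continuous_cexp_neg_sq_div_pow hz n).aestronglyMeasurable (.of_forall fun x => ?_)
  simpa using norm_cexp_neg_sq_div_pow_le (abs_pos.mpr hz) le_rfl x n

lemma integrable_cexp_neg_sq_div_sub {z : ℂ} (hz : z.im ≠ 0) :
    Integrable fun x : ℝ => cexp (-(x : ℂ) ^ 2) / ((x : ℂ) - z) := by
  simpa using integrable_cexp_neg_sq_div_pow hz 1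

lemma integrable_cexp_neg_sq : Integrable fun x : ℝ => cexp (-(x : ℂ) ^ 2) := by
  simpa using integrable_cexp_neg_mul_sq (b := 1) (by simp)

lemma integral_cexp_neg_sq : ∫ x : ℝ, cexp (-(x : ℂ) ^ 2) = (√π : ℂ) := by
  have h := congrArg ((↑) : ℝ → ℂ) (integral_gaussian 1)
  rw [← integral_complex_ofReal] at h
  simpa using h

lemma tendsto_cexp_neg_sq_div_sub_cocompact {z : ℂ} (hz : z.im ≠ 0) :
    Tendsto (fun x : ℝ => cexp (-(x : ℂ) ^ 2) / ((x : ℂ) - z)) (cocompact ℝ) (𝓝 0) := by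
  refine squeeze_zero_norm (a := fun x => |z.im|⁻¹ * rexp (-x ^ 2)) (fun x => ?_) ?_
  · simpa using norm_cexp_neg_sq_div_pow_le (abs_pos.mpr hz) le_rfl x 1
  · simpa using (tendsto_rpow_abs_mul_exp_neg_mul_sq_cocompact one_pos 0).const_mul |z.im|⁻¹

lemma hasDerivAt_cexp_neg_sq_div_sub {z : ℂ} (hz : z.im ≠ 0) (x : ℝ) :
    HasDerivAt (fun x : ℝ => cexp (-(x : ℂ) ^ 2) / ((x : ℂ) - z))
      (-(2 * cexp (-(x : ℂ) ^ 2) + 2 * z * (cexp (-(x : ℂ) ^ 2) / ((x : ℂ) - z))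
        + cexp (-(x : ℂ) ^ 2) / ((x : ℂ) - z) ^ 2)) x := by
  have hx : HasDerivAt (fun x : ℝ => (x : ℂ)) 1 x := by simpa using (hasDerivAt_id x).ofReal_comp
  have hexp : HasDerivAt (fun x : ℝ => cexp (-(x : ℂ) ^ 2)) (cexp (-(x : ℂ) ^ 2) * -(2 * x)) x :=
    by simpa using ((hx.pow 2).neg).cexp
  have hne := ofReal_sub_ne_zero_of_im_ne_zero hz x
  refine (hexp.fun_div (hx.sub_const z) hne).congr_deriv ?_
  field_simp
  ring

lemma integral_cexp_neg_sq_div_sub_sq {z : ℂ} (hz : z.im ≠ 0) :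
    ∫ x : ℝ, cexp (-(x : ℂ) ^ 2) / ((x : ℂ) - z) ^ 2
      = -2 * √π - 2 * z * ∫ x : ℝ, cexp (-(x : ℂ) ^ 2) / ((x : ℂ) - z) := by
  have hgauss := integrable_cexp_neg_sq.const_mul 2
  have hfirst := (integrable_cexp_neg_sq_div_sub hz).const_mul (2 * z)
  have hsecond := integrable_cexp_neg_sq_div_pow hz 2
  have hvanish := integral_of_hasDerivAt_of_tendsto (hasDerivAt_cexp_neg_sq_div_sub hz)
    ((hgauss.fun_add hfirst).fun_add hsecond).neg
    ((tendsto_cexp_neg_sq_div_sub_cocompact hz).mono_left atBot_le_cocompact)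
    ((tendsto_cexp_neg_sq_div_sub_cocompact hz).mono_left atTop_le_cocompact)
  rw [integral_neg, integral_add (hgauss.fun_add hfirst) hsecond, integral_add hgauss hfirst,
    integral_const_mul, integral_const_mul, integral_cexp_neg_sq] at hvanish
  linear_combination -hvanish

lemma hasDerivAt_const_div_sub (c w : ℂ) {z : ℂ} (hz : w - z ≠ 0) :
    HasDerivAt (fun z => c / (w - z)) (c / (w - z) ^ 2) z := by
  refine ((hasDerivAt_const z c).fun_div ((hasDerivAt_id' z).const_sub w) hz).congr_deriv ?_
  field_simp
  ring

lemma hasDerivAt_integral_cexp_neg_sq_div_sub {ζ : ℂ} (hζ : ζ.im ≠ 0) :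
    HasDerivAt (fun z => ∫ x : ℝ, cexp (-(x : ℂ) ^ 2) / ((x : ℂ) - z))
      (∫ x : ℝ, cexp (-(x : ℂ) ^ 2) / ((x : ℂ) - ζ) ^ 2) ζ := by
  have hr : 0 < |ζ.im| / 2 := by positivity
  have him_ball : ∀ z ∈ ball ζ (|ζ.im| / 2), |ζ.im| / 2 ≤ |z.im| := fun z hz => by
    linarith [abs_im_sub_le_abs_im_of_mem_ball hz]
  have him_ne : ∀ z ∈ ball ζ (|ζ.im| / 2), z.im ≠ 0 := fun z hz =>
    abs_pos.mp (hr.trans_le (him_ball z hz))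
  refine (hasDerivAt_integral_of_dominated_loc_of_deriv_le (ball_mem_nhds ζ hr)
    (eventually_of_mem (ball_mem_nhds ζ hr) fun z hz =>
      (continuous_cexp_neg_sq_div_pow (him_ne z hz) 1).aestronglyMeasurable.congr
        (.of_forall fun x => by simp))
    (integrable_cexp_neg_sq_div_sub hζ)
    (continuous_cexp_neg_sq_div_pow hζ 2).aestronglyMeasurable
    (.of_forall fun x z hz => norm_cexp_neg_sq_div_pow_le hr (him_ball z hz) x 2)
    (integrable_exp_neg_sq.const_mul _)
    (.of_forall fun x z hz =>
      hasDerivAt_const_div_sub _ _ (ofReal_sub_ne_zero_of_im_ne_zero (him_ne z hz) x))).2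

/-- The plasma dispersion function is complex differentiable on the open upper half
plane and satisfies `Z′(ζ) = −2(1 + ζ Z(ζ))` there. -/
theorem plasmaZ_hasDerivAt (ζ : ℂ) (hζ : 0 < ζ.im) :
    HasDerivAt plasmaZ (-2 * (1 + ζ * plasmaZ ζ)) ζ := by
  have hπ : (√π : ℂ) ≠ 0 := by exact_mod_cast (sqrt_pos.mpr pi_pos).ne'
  refine ((hasDerivAt_integral_cexp_neg_sq_div_sub hζ.ne').const_mul (√π : ℂ)⁻¹).congr_deriv ?_
  rw [integral_cexp_neg_sq_div_sub_sq hζ.ne', plasmaZ]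
  field_simp
  ring
end

section
/- The plasma dispersion function is expressed through the error function: for every complex ζ with Im ζ > 0, Z(ζ) = i √π e^{−ζ²} (1 + erf(iζ)), where erf(iζ) is given by the path integral erf(iζ) = (2iζ/√π) ∫₀¹ e^{ζ² s²} ds. Equivalently, π^{−1/2} ∫_ℝ e^{−x²}/(x − ζ) dx = i √π e^{−ζ²} ( 1 + (2iζ/√π) ∫₀¹ e^{ζ² s²} ds ). -/
/-!
Since `Im ζ > 0`, `(x - ζ)⁻¹ = 2i ∫₀^∞ e^{-2i(x-ζ)u} du`. Swapping the integrals, the inner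
Gaussian integral in `x` is `√π e^{-u² + 2iζu} = √π e^{-ζ²} e^{-(u-iζ)²}`, so everything reduces to
the shifted half-line Gaussian `∫₀^∞ e^{-(u-w)²} du = √π/2 + w ∫₀¹ e^{-(sw)²} ds` at `w = iζ`.
For the latter, `∂_r e^{-(u-rw)²} = -w ∂_u e^{-(u-rw)²}`: integrating over `r ∈ [0,1]` and then
over `u > 0` (Fubini) leaves only the boundary term at `u = 0`.
-/

open MeasureTheory Set Filter Complex Real

lemma norm_cexp_neg_sq_sub_le (u : ℝ) (z : ℂ) :
    ‖cexp (-((u : ℂ) - z) ^ 2)‖ ≤ Real.exp (‖z‖ ^ 2) * Real.exp (-(1 / 2) * u ^ 2) := by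
  rw [norm_exp, ← Real.exp_add, Real.exp_le_exp, Complex.sq_norm, normSq_apply]
  have : (-((u : ℂ) - z) ^ 2).re = z.im ^ 2 - (u - z.re) ^ 2 := by
    simp [sq]
  rw [this]
  nlinarith [sq_nonneg (u - 2 * z.re)]

lemma norm_sub_mul_cexp_neg_sq_sub_le (u : ℝ) (z : ℂ) :
    ‖((u : ℂ) - z) * cexp (-((u : ℂ) - z) ^ 2)‖ ≤
      Real.exp (‖z‖ ^ 2) * ((|u| + ‖z‖) * Real.exp (-(1 / 2) * u ^ 2)) := by
  rw [norm_mul]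
  calc ‖(u : ℂ) - z‖ * ‖cexp (-((u : ℂ) - z) ^ 2)‖
      ≤ (|u| + ‖z‖) * (Real.exp (‖z‖ ^ 2) * Real.exp (-(1 / 2) * u ^ 2)) := by
        gcongr
        · simpa using norm_sub_le (u : ℂ) z
        · exact norm_cexp_neg_sq_sub_le u z
    _ = _ := by ring

lemma integrable_abs_add_mul_exp_neg_mul_sq {b : ℝ} (hb : 0 < b) (c : ℝ) :
    Integrable fun u : ℝ => (|u| + c) * Real.exp (-b * u ^ 2) := by
  simp_rw [add_mul]
  exact (integrable_mul_exp_neg_mul_sq hb).norm.congr (by simp) |>.add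
    ((integrable_exp_neg_mul_sq hb).const_mul c)

lemma integrable_sub_mul_cexp_neg_sq_sub (z : ℂ) :
    Integrable fun u : ℝ => ((u : ℂ) - z) * cexp (-((u : ℂ) - z) ^ 2) :=
  ((integrable_abs_add_mul_exp_neg_mul_sq one_half_pos ‖z‖).const_mul _).mono'
    (by fun_prop : Continuous _).aestronglyMeasurable
    (ae_of_all _ fun u => norm_sub_mul_cexp_neg_sq_sub_le u z)

lemma hasDerivAt_cexp_neg_sq (z : ℂ) :
    HasDerivAt (fun z => cexp (-z ^ 2)) (-2 * z * cexp (-z ^ 2)) z :=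
  (hasDerivAt_pow 2 z).fun_neg.cexp.congr_deriv <| by
    simp only [Nat.cast_ofNat, Nat.add_one_sub_one, pow_one]
    ring

lemma tendsto_cexp_neg_sq_sub_atTop (z : ℂ) :
    Tendsto (fun u : ℝ => cexp (-((u : ℂ) - z) ^ 2)) atTop (nhds 0) := by
  refine squeeze_zero_norm (norm_cexp_neg_sq_sub_le · z) ?_
  have : Tendsto (fun u : ℝ => -(1 / 2) * u ^ 2) atTop atBot :=
    (tendsto_pow_atTop two_ne_zero).const_mul_atTop_of_neg (by norm_num)
  simpa using (Real.tendsto_exp_atBot.comp this).const_mul (Real.exp (‖z‖ ^ 2))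

lemma integral_Ioi_sub_mul_cexp_neg_sq_sub (z : ℂ) :
    ∫ u in Ioi (0 : ℝ), ((u : ℂ) - z) * cexp (-((u : ℂ) - z) ^ 2) = cexp (-z ^ 2) / 2 := by
  have hderiv (u : ℝ) : HasDerivAt (fun u : ℝ => -cexp (-((u : ℂ) - z) ^ 2) / 2)
      (((u : ℂ) - z) * cexp (-((u : ℂ) - z) ^ 2)) u := by
    have h : HasDerivAt (fun v : ℂ => -cexp (-(v - z) ^ 2) / 2)
        (((u : ℂ) - z) * cexp (-((u : ℂ) - z) ^ 2)) u :=
      ((hasDerivAt_cexp_neg_sq _).comp_sub_const (u : ℂ) z).fun_neg.div_const 2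
        |>.congr_deriv (by ring)
    exact h.comp_ofReal
  rw [integral_Ioi_of_hasDerivAt_of_tendsto' (fun u _ => hderiv u)
    (integrable_sub_mul_cexp_neg_sq_sub z).integrableOn
    (by simpa using ((tendsto_cexp_neg_sq_sub_atTop z).neg.div_const 2))]
  simp only [ofReal_zero, zero_sub, neg_sq]
  ring

lemma hasDerivAt_cexp_neg_sq_sub_mul (u : ℝ) (w : ℂ) (r : ℝ) :
    HasDerivAt (fun r : ℝ => cexp (-((u : ℂ) - r * w) ^ 2))
      (2 * w * (((u : ℂ) - r * w) * cexp (-((u : ℂ) - r * w) ^ 2))) r := by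
  have h : HasDerivAt (fun v : ℂ => cexp (-((u : ℂ) - v * w) ^ 2))
      (2 * w * (((u : ℂ) - r * w) * cexp (-((u : ℂ) - r * w) ^ 2))) r :=
    ((hasDerivAt_cexp_neg_sq _).comp (r : ℂ) (((hasDerivAt_id _).mul_const w).const_sub _))
      |>.congr_deriv (by ring)
  exact h.comp_ofReal

lemma integrable_prod_sub_mul_cexp_neg_sq_sub_mul (w : ℂ) :
    Integrable
      (Function.uncurry fun (u r : ℝ) => ((u : ℂ) - r * w) * cexp (-((u : ℂ) - r * w) ^ 2))
      ((volume.restrict (Ioi 0)).prod (volume.restrict (Ioc 0 1))) := by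
  have hdom : Integrable (fun p : ℝ × ℝ =>
      Real.exp (‖w‖ ^ 2) * ((|p.1| + ‖w‖) * Real.exp (-(1 / 2) * p.1 ^ 2)))
      ((volume.restrict (Ioi 0)).prod (volume.restrict (Ioc 0 1))) :=
    (((integrable_abs_add_mul_exp_neg_mul_sq one_half_pos ‖w‖).const_mul _).restrict).comp_fst _
  refine hdom.mono' (by fun_prop : Continuous _).aestronglyMeasurable ?_
  rw [Measure.prod_restrict]
  filter_upwards [ae_restrict_mem (measurableSet_Ioi.prod measurableSet_Ioc)] with p hp
  have hrw : ‖(p.2 : ℂ) * w‖ ≤ ‖w‖ := by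
    rw [norm_mul, norm_real, Real.norm_eq_abs, abs_of_pos hp.2.1]
    exact mul_le_of_le_one_left (norm_nonneg w) hp.2.2
  refine (norm_sub_mul_cexp_neg_sq_sub_le p.1 _).trans ?_
  gcongr

lemma integral_Ioi_cexp_neg_sq :
    ∫ u in Ioi (0 : ℝ), cexp (-(u : ℂ) ^ 2) = (√π : ℂ) / 2 := by
  have := congrArg ofReal (integral_gaussian_Ioi 1)
  rw [← integral_complex_ofReal] at this
  simpa using this

lemma integral_Ioi_cexp_neg_sq_sub (w : ℂ) :
    ∫ u in Ioi (0 : ℝ), cexp (-((u : ℂ) - w) ^ 2) =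
      (√π : ℂ) / 2 + w * ∫ s in (0 : ℝ)..1, cexp (-((s : ℂ) * w) ^ 2) := by
  have hftc (u : ℝ) : cexp (-((u : ℂ) - w) ^ 2) = cexp (-(u : ℂ) ^ 2) +
      2 * w * ∫ r in Ioc (0 : ℝ) 1, ((u : ℂ) - r * w) * cexp (-((u : ℂ) - r * w) ^ 2) := by
    have := intervalIntegral.integral_eq_sub_of_hasDerivAt
      (fun r _ => hasDerivAt_cexp_neg_sq_sub_mul u w r)
      (Continuous.intervalIntegrable (by fun_prop) 0 1)
    rw [intervalIntegral.integral_of_le zero_le_one, integral_const_mul] at this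
    simp only [ofReal_one, one_mul, ofReal_zero, zero_mul, sub_zero] at this
    rw [this]
    ring
  have hprod := integrable_prod_sub_mul_cexp_neg_sq_sub_mul w
  have hgauss : IntegrableOn (fun u : ℝ => cexp (-(u : ℂ) ^ 2)) (Ioi 0) := by
    simpa using (integrable_cexp_quadratic (b := 1) one_pos 0 0).integrableOn (s := Ioi 0)
  have hinner : Integrable (fun u : ℝ => ∫ r in Ioc (0 : ℝ) 1,
      ((u : ℂ) - r * w) * cexp (-((u : ℂ) - r * w) ^ 2)) (volume.restrict (Ioi 0)) :=
    hprod.integral_prod_left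
  simp_rw [hftc]
  rw [integral_add hgauss (hinner.const_mul _), integral_const_mul, integral_Ioi_cexp_neg_sq,
    integral_integral_swap hprod, intervalIntegral.integral_of_le zero_le_one]
  simp_rw [integral_Ioi_sub_mul_cexp_neg_sq_sub]
  rw [integral_div]
  ring

lemma inv_eq_two_I_mul_integral_Ioi {z : ℂ} (hz : z.im < 0) :
    z⁻¹ = 2 * I * ∫ u in Ioi (0 : ℝ), cexp (-2 * I * z * u) := by
  have hre : (-2 * I * z).re < 0 := by
    rw [show (-2 * I * z).re = 2 * z.im by simp]
    linarith
  have hz0 : z ≠ 0 := fun h => by simp [h] at hz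
  rw [integral_exp_mul_complex_Ioi hre 0, ofReal_zero, mul_zero, Complex.exp_zero]
  field_simp

lemma integral_cexp_neg_sq_mul_cexp (ζ : ℂ) (u : ℝ) :
    ∫ x : ℝ, cexp (-(x : ℂ) ^ 2) * cexp (-2 * I * ((x : ℂ) - ζ) * u) =
      √π * cexp (-ζ ^ 2) * cexp (-((u : ℂ) - I * ζ) ^ 2) := by
  have h (x : ℝ) : cexp (-(x : ℂ) ^ 2) * cexp (-2 * I * ((x : ℂ) - ζ) * u) =
      cexp (-1 * x ^ 2 + (-2 * I * u) * x + 2 * I * ζ * u) := by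
    rw [← Complex.exp_add]
    congr 1
    ring
  simp_rw [h]
  rw [integral_cexp_quadratic (by simp), mul_assoc (√π : ℂ), ← Complex.exp_add]
  congr 1
  · rw [Real.sqrt_eq_rpow, ofReal_cpow pi_pos.le]
    norm_num
  · congr 1
    linear_combination (ζ ^ 2 + (u : ℂ) ^ 2) * I_sq

lemma integrable_prod_cexp_neg_sq_mul_cexp {ζ : ℂ} (hζ : 0 < ζ.im) :
    Integrable
      (Function.uncurry fun (x u : ℝ) => cexp (-(x : ℂ) ^ 2) * cexp (-2 * I * ((x : ℂ) - ζ) * u))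
      (volume.prod (volume.restrict (Ioi 0))) := by
  have hdom : Integrable (fun p : ℝ × ℝ => Real.exp (-1 * p.1 ^ 2) * Real.exp (-(2 * ζ.im) * p.2))
      (volume.prod (volume.restrict (Ioi 0))) :=
    (integrable_exp_neg_mul_sq one_pos).mul_prod (exp_neg_integrableOn_Ioi 0 (by positivity))
  refine hdom.mono' (by fun_prop : Continuous _).aestronglyMeasurable (ae_of_all _ fun p => ?_)
  obtain ⟨x, u⟩ := p
  simp only [Function.uncurry_apply_pair, norm_mul, Complex.norm_exp]
  apply le_of_eq
  congr 2 <;> simp [sq]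

lemma integral_cexp_neg_sq_div_sub {ζ : ℂ} (hζ : 0 < ζ.im) :
    ∫ x : ℝ, cexp (-(x : ℂ) ^ 2) / ((x : ℂ) - ζ) =
      2 * I * √π * cexp (-ζ ^ 2) * ∫ u in Ioi (0 : ℝ), cexp (-((u : ℂ) - I * ζ) ^ 2) := by
  have hpt (x : ℝ) : cexp (-(x : ℂ) ^ 2) / ((x : ℂ) - ζ) =
      2 * I * ∫ u in Ioi (0 : ℝ), cexp (-(x : ℂ) ^ 2) * cexp (-2 * I * ((x : ℂ) - ζ) * u) := by
    rw [div_eq_mul_inv, inv_eq_two_I_mul_integral_Ioi (by simpa using hζ), integral_const_mul]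
    ring
  simp_rw [hpt]
  rw [integral_const_mul, integral_integral_swap (integrable_prod_cexp_neg_sq_mul_cexp hζ)]
  simp_rw [integral_cexp_neg_sq_mul_cexp, integral_const_mul]
  ring

/-- The plasma dispersion function expressed through the error function: for `Im ζ > 0`,
`π^{−1/2} ∫_ℝ e^{−x²}/(x − ζ) dx = i √π e^{−ζ²} (1 + (2iζ/√π) ∫₀¹ e^{ζ²s²} ds)`. -/
theorem plasmaZ_eq_erf (ζ : ℂ) (hζ : 0 < ζ.im) :
    (Real.sqrt Real.pi : ℂ)⁻¹ * (∫ x : ℝ, Complex.exp (-(x : ℂ) ^ 2) / ((x : ℂ) - ζ)) =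
      Complex.I * (Real.sqrt Real.pi : ℂ) * Complex.exp (-ζ ^ 2) *
        (1 + 2 * Complex.I * ζ / (Real.sqrt Real.pi : ℂ) *
          ∫ s in (0:ℝ)..1, Complex.exp (ζ ^ 2 * (s : ℂ) ^ 2)) := by
  have hsq (s : ℝ) : -((s : ℂ) * (I * ζ)) ^ 2 = ζ ^ 2 * (s : ℂ) ^ 2 := by
    linear_combination (-(s : ℂ) ^ 2 * ζ ^ 2) * I_sq
  have hπ : (√π : ℂ) ≠ 0 := ofReal_ne_zero.mpr (Real.sqrt_pos.mpr pi_pos).ne'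
  rw [integral_cexp_neg_sq_div_sub hζ, integral_Ioi_cexp_neg_sq_sub]
  simp_rw [hsq]
  field_simp
end

section
/- The two-stream dispersion integral identity: let v_th > 0, u ∈ ℝ, and let f₀(v) = (1/2)(2π v_th²)^{−1/2} [ exp(−(v + u)²/(2 v_th²)) + exp(−(v − u)²/(2 v_th²)) ] be the two-beam equilibrium. Then for every complex w with Im w > 0, setting ζ₋ = (w − u)/(√2 v_th) and ζ₊ = (w + u)/(√2 v_th), the integral ∫_ℝ f₀′(v)/(v − w) dv equals −(1/(2 v_th²)) [ (1 + ζ₋ Z(ζ₋)) + (1 + ζ₊ Z(ζ₊)) ], i.e. equals (1/(4 v_th²)) [ Z′(ζ₋) + Z′(ζ₊) ] where Z′(ζ) = −2(1 + ζ Z(ζ)). -/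
open MeasureTheory

/-!
Each beam contributes separately. The substitution `v = √2 v_th x - a` turns the derivative of a
Gaussian centred at `-a` into a multiple of `x e^{-x²}`, and the Cauchy kernel transforms
covariantly, `1 / (v - w) = (1 / (√2 v_th)) / (x - ζ)`. Finally `x / (x - ζ) = 1 + ζ / (x - ζ)`
splits `∫ x e^{-x²} / (x - ζ) dx` into the Gaussian integral `√π` and `ζ √π Z(ζ)`.
-/

lemma abs_im_le_norm_ofReal_sub_s7 (ζ : ℂ) (x : ℝ) : |ζ.im| ≤ ‖(x : ℂ) - ζ‖ := by
  simpa using Complex.abs_im_le_norm ((x : ℂ) - ζ)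

lemma ofReal_sub_ne_zero_of_im_ne_zero_s7 {ζ : ℂ} (hζ : ζ.im ≠ 0) (x : ℝ) : (x : ℂ) - ζ ≠ 0 :=
  norm_pos_iff.mp ((abs_pos.mpr hζ).trans_le (abs_im_le_norm_ofReal_sub_s7 ζ x))

/-- Off the real axis `1 / (x - ζ)` is bounded by `1 / |Im ζ|`. -/
lemma MeasureTheory.Integrable.div_ofReal_sub {g : ℝ → ℂ} (hg : Integrable g) {ζ : ℂ}
    (hζ : ζ.im ≠ 0) : Integrable (fun x : ℝ => g x / ((x : ℂ) - ζ)) := by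
  simp_rw [div_eq_mul_inv]
  refine hg.mul_bdd (c := |ζ.im|⁻¹) (by fun_prop) (Filter.Eventually.of_forall fun x => ?_)
  rw [norm_inv]
  exact inv_anti₀ (abs_pos.mpr hζ) (abs_im_le_norm_ofReal_sub_s7 ζ x)

lemma integral_cexp_neg_sq_s7 : ∫ x : ℝ, Complex.exp (-(x : ℂ) ^ 2) = Real.sqrt Real.pi := by
  have h := integral_gaussian 1
  simp only [neg_mul, one_mul, div_one] at h
  rw [← h, ← integral_complex_ofReal]
  push_cast
  rfl

lemma integral_mul_cexp_neg_sq_div_sub {ζ : ℂ} (hζ : ζ.im ≠ 0) :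
    ∫ x : ℝ, (x : ℂ) * Complex.exp (-(x : ℂ) ^ 2) / ((x : ℂ) - ζ)
      = Real.sqrt Real.pi * (1 + ζ * plasmaZ ζ) := by
  have hsplit : ∀ x : ℝ, (x : ℂ) * Complex.exp (-(x : ℂ) ^ 2) / ((x : ℂ) - ζ)
      = Complex.exp (-(x : ℂ) ^ 2) + ζ * (Complex.exp (-(x : ℂ) ^ 2) / ((x : ℂ) - ζ)) := by
    intro x
    field_simp [ofReal_sub_ne_zero_of_im_ne_zero_s7 hζ x]
    ring
  have hgauss : Integrable (fun x : ℝ => Complex.exp (-(x : ℂ) ^ 2)) := by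
    simpa using integrable_cexp_neg_mul_sq (b := 1) (by norm_num)
  simp_rw [hsplit]
  rw [integral_add hgauss ((hgauss.div_ofReal_sub hζ).const_mul ζ), integral_const_mul,
    integral_cexp_neg_sq_s7, plasmaZ]
  field_simp

lemma integral_comp_div_add_div_ofReal_sub (φ : ℝ → ℂ) {c : ℝ} (hc : 0 < c) (a : ℝ) (w : ℂ) :
    ∫ v : ℝ, φ ((v + a) / c) / ((v : ℂ) - w)
      = ∫ x : ℝ, φ x / ((x : ℂ) - (w + a) / c) := by
  have hc0 : (c : ℂ) ≠ 0 := by exact_mod_cast hc.ne'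
  have hscale : ∀ y : ℝ, φ (y / c) / (((y - a : ℝ) : ℂ) - w)
      = (c : ℂ)⁻¹ * (φ (y / c) / (((y / c : ℝ) : ℂ) - (w + a) / c)) := by
    intro y
    push_cast
    field_simp
    ring
  calc ∫ v : ℝ, φ ((v + a) / c) / ((v : ℂ) - w)
      = ∫ y : ℝ, φ (y / c) / (((y - a : ℝ) : ℂ) - w) := by
        rw [← integral_sub_right_eq_self _ a]
        simp only [sub_add_cancel]
    _ = ∫ x : ℝ, φ x / ((x : ℂ) - (w + a) / c) := by
        simp_rw [hscale]
        rw [integral_const_mul, Measure.integral_comp_div (fun x : ℝ => φ x / ((x : ℂ) - (w + a) / c)),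
          abs_of_pos hc, Complex.real_smul, inv_mul_cancel_left₀ hc0]

lemma hasDerivAt_exp_neg_sq_div (σ b v : ℝ) :
    HasDerivAt (fun y : ℝ => Real.exp (-(y + b) ^ 2 / (2 * σ ^ 2)))
      (-(v + b) / σ ^ 2 * Real.exp (-(v + b) ^ 2 / (2 * σ ^ 2))) v := by
  have h : HasDerivAt (fun y : ℝ => -(y + b) ^ 2 / (2 * σ ^ 2)) (-(2 * (v + b)) / (2 * σ ^ 2)) v := by
    simpa using (((hasDerivAt_id v).add_const b).pow 2).neg.div_const (2 * σ ^ 2)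
  convert h.exp using 1
  ring

lemma hasDerivAt_exp_neg_sq_div_add_exp_neg_sq_div (σ u v : ℝ) :
    HasDerivAt (fun y : ℝ => Real.exp (-(y + u) ^ 2 / (2 * σ ^ 2)) +
        Real.exp (-(y - u) ^ 2 / (2 * σ ^ 2)))
      (-(v + u) / σ ^ 2 * Real.exp (-(v + u) ^ 2 / (2 * σ ^ 2)) +
        -(v + -u) / σ ^ 2 * Real.exp (-(v + -u) ^ 2 / (2 * σ ^ 2))) v :=
  (hasDerivAt_exp_neg_sq_div σ u v).add <| (hasDerivAt_exp_neg_sq_div σ (-u) v).congr_of_eventuallyEq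
    (.of_forall fun y => by simp only [sub_eq_add_neg])

lemma integrable_gaussian_deriv {σ : ℝ} (hσ : σ ≠ 0) (a : ℝ) :
    Integrable (fun v : ℝ => -(v + a) / σ ^ 2 * Real.exp (-(v + a) ^ 2 / (2 * σ ^ 2))) := by
  have hb : 0 < 1 / (2 * σ ^ 2) := by positivity
  refine (((integrable_mul_exp_neg_mul_sq hb).comp_add_right a).const_mul (-1 / σ ^ 2)).congr
    (Filter.Eventually.of_forall fun v => ?_)
  ring_nf

lemma integral_gaussian_deriv_div_sub {σ : ℝ} (hσ : 0 < σ) (a : ℝ) {w : ℂ} (hw : w.im ≠ 0) :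
    ∫ v : ℝ, ((-(v + a) / σ ^ 2 * Real.exp (-(v + a) ^ 2 / (2 * σ ^ 2)) : ℝ) : ℂ) / ((v : ℂ) - w)
      = -((Real.sqrt (2 * Real.pi) / σ : ℝ) : ℂ) *
          (1 + (w + a) / ((Real.sqrt 2 : ℂ) * σ) * plasmaZ ((w + a) / ((Real.sqrt 2 : ℂ) * σ))) := by
  set c : ℝ := Real.sqrt 2 * σ with hc_def
  have hc : 0 < c := by positivity
  have hc_sq : c ^ 2 = 2 * σ ^ 2 := by
    rw [hc_def, mul_pow, Real.sq_sqrt zero_le_two]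
  have hζ : (w + a) / ((Real.sqrt 2 : ℂ) * σ) = (w + a) / (c : ℂ) := by
    rw [hc_def]; push_cast; rfl
  have hζ_im : ((w + a) / (c : ℂ)).im ≠ 0 := by
    rw [Complex.div_ofReal_im]
    simpa [hc.ne'] using hw
  have hreal : ∀ v : ℝ, -(v + a) / σ ^ 2 * Real.exp (-(v + a) ^ 2 / (2 * σ ^ 2))
      = -(2 / c) * ((v + a) / c * Real.exp (-((v + a) / c) ^ 2)) := by
    intro v
    rw [div_pow, hc_sq]
    field_simp
    rw [hc_sq]
    ring
  have hconst : 2 / c * Real.sqrt Real.pi = Real.sqrt (2 * Real.pi) / σ := by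
    rw [hc_def, Real.sqrt_mul zero_le_two]
    field_simp
    rw [Real.sq_sqrt zero_le_two]
  have hpt : ∀ v : ℝ,
      ((-(v + a) / σ ^ 2 * Real.exp (-(v + a) ^ 2 / (2 * σ ^ 2)) : ℝ) : ℂ) / ((v : ℂ) - w)
        = ((-(2 / c) : ℝ) : ℂ) * (((v + a) / c : ℝ) * Complex.exp (-(((v + a) / c : ℝ) : ℂ) ^ 2)
            / ((v : ℂ) - w)) := by
    intro v
    rw [hreal, Complex.ofReal_mul, Complex.ofReal_mul, Complex.ofReal_exp]
    push_cast
    ring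
  simp_rw [hpt]
  rw [integral_const_mul, integral_comp_div_add_div_ofReal_sub
    (fun x : ℝ => (x : ℂ) * Complex.exp (-(x : ℂ) ^ 2)) hc, hζ,
    integral_mul_cexp_neg_sq_div_sub hζ_im, ← hconst]
  push_cast
  ring

/-- The two-stream dispersion integral identity: for the two-beam equilibrium
`f₀(v) = (1/2)(2π v_th²)^{−1/2} [exp(−(v+u)²/(2v_th²)) + exp(−(v−u)²/(2v_th²))]`
and `Im w > 0`, with `ζ∓ = (w ∓ u)/(√2 v_th)`,
`∫_ℝ f₀′(v)/(v − w) dv = −(1/(2 v_th²)) [(1 + ζ₋ Z(ζ₋)) + (1 + ζ₊ Z(ζ₊))]`. -/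
theorem two_stream_dispersion_integral
    (vth u : ℝ) (hvth : 0 < vth) (w : ℂ) (hw : 0 < w.im) :
    (∫ v : ℝ,
        ((deriv (fun y : ℝ =>
          (1 / 2) * (Real.sqrt (2 * Real.pi * vth ^ 2))⁻¹ *
            (Real.exp (-(y + u) ^ 2 / (2 * vth ^ 2)) +
              Real.exp (-(y - u) ^ 2 / (2 * vth ^ 2)))) v : ℝ) : ℂ) / ((v : ℂ) - w)) =
      -(1 / (2 * (vth : ℂ) ^ 2)) *
        ((1 + (w - (u : ℂ)) / ((Real.sqrt 2 : ℂ) * (vth : ℂ)) *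
            plasmaZ ((w - (u : ℂ)) / ((Real.sqrt 2 : ℂ) * (vth : ℂ)))) +
          (1 + (w + (u : ℂ)) / ((Real.sqrt 2 : ℂ) * (vth : ℂ)) *
            plasmaZ ((w + (u : ℂ)) / ((Real.sqrt 2 : ℂ) * (vth : ℂ))))) := by
  set C : ℝ := (1 / 2) * (Real.sqrt (2 * Real.pi * vth ^ 2))⁻¹ with hC_def
  set g : ℝ → ℝ → ℝ := fun a v => -(v + a) / vth ^ 2 * Real.exp (-(v + a) ^ 2 / (2 * vth ^ 2))
  have hderiv (v : ℝ) : deriv (fun y : ℝ => C * (Real.exp (-(y + u) ^ 2 / (2 * vth ^ 2)) +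
      Real.exp (-(y - u) ^ 2 / (2 * vth ^ 2)))) v = C * (g u v + g (-u) v) :=
    ((hasDerivAt_exp_neg_sq_div_add_exp_neg_sq_div vth u v).const_mul C).deriv
  have hC : (C : ℂ) * ((Real.sqrt (2 * Real.pi) / vth : ℝ) : ℂ) = 1 / (2 * (vth : ℂ) ^ 2) := by
    have hreal : C * (Real.sqrt (2 * Real.pi) / vth) = 1 / (2 * vth ^ 2) := by
      rw [hC_def, Real.sqrt_mul' _ (sq_nonneg vth), Real.sqrt_sq hvth.le]
      field_simp
    exact_mod_cast hreal
  have hintegrable (a : ℝ) : Integrable (fun v : ℝ => (g a v : ℂ) / ((v : ℂ) - w)) :=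
    (integrable_gaussian_deriv hvth.ne' a).ofReal.div_ofReal_sub hw.ne'
  conv_lhs => simp only [hderiv, Complex.ofReal_mul, Complex.ofReal_add, mul_div_assoc, add_div]
  rw [integral_const_mul, integral_add (hintegrable u) (hintegrable (-u)),
    integral_gaussian_deriv_div_sub hvth u hw.ne', integral_gaussian_deriv_div_sub hvth (-u) hw.ne',
    Complex.ofReal_neg, ← sub_eq_add_neg, ← hC]
  ring
end

section
/- Second integral in the kinetic Weibel dispersion derivation: let v_th > 0, u ∈ ℝ, and define the two-beam Maxwellians f^±(v_x, v_y) = (1/(2π v_th²)) exp(−(v_x² + (v_y ± u)²)/(2 v_th²)). Then for every complex w with Im w > 0, setting ζ = w/(√2 v_th), Σ_{±} ∫_ℝ ∫_ℝ v_y² (∂f^±/∂v_x)(v_x, v_y) / (w − v_x) dv_x dv_y = 2 (1 + ζ Z(ζ)) (1 + u²/v_th²), i.e. equals −Z′(ζ)(1 + u²/v_th²) where Z′(ζ) = −2(1 + ζ Z(ζ)). -/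
open MeasureTheory

/-- The two-beam Maxwellian `f⁺(vx,vy) = (1/(2π v_th²)) exp(−(vx² + (vy + u)²)/(2 v_th²))`. -/
noncomputable def fPlus (vth u vx vy : ℝ) : ℝ :=
  (1 / (2 * Real.pi * vth ^ 2)) * Real.exp (-(vx ^ 2 + (vy + u) ^ 2) / (2 * vth ^ 2))

/-- The two-beam Maxwellian `f⁻(vx,vy) = (1/(2π v_th²)) exp(−(vx² + (vy − u)²)/(2 v_th²))`. -/
noncomputable def fMinus (vth u vx vy : ℝ) : ℝ :=
  (1 / (2 * Real.pi * vth ^ 2)) * Real.exp (-(vx ^ 2 + (vy - u) ^ 2) / (2 * vth ^ 2))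

open Real Complex ProbabilityTheory NNReal

/-! Under the substitution `x = √(2v) y` a centred Gaussian of variance `v` becomes one of
variance `1/2`, whose density is `π^{-1/2} e^{-y²}`; in that language `Z(ζ) = 𝔼[1/(Y - ζ)]`, and
`y/(ζ - y) = -1 - ζ/(y - ζ)` gives `𝔼[Y/(ζ - Y)] = -(1 + ζ Z(ζ))`. Each beam is a product of
Gaussian densities in `v_x` and `v_y` with variance `v_th²`, and `∂f/∂v_x = -(v_x/v_th²) f`, so its
double integral is `-(1/v_th²) 𝔼[v_y²] 𝔼[v_x/(w - v_x)] = (1 + u²/v_th²)(1 + ζ Z(ζ))`; the beam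
`f⁻` is `f⁺` with `u` replaced by `-u`. -/

lemma integral_sq_gaussianReal (μ : ℝ) (v : ℝ≥0) :
    ∫ x, x ^ 2 ∂gaussianReal μ v = v + μ ^ 2 := by
  have h := variance_eq_sub (memLp_id_gaussianReal (μ := μ) (v := v) 2)
  rw [variance_id_gaussianReal] at h
  simp only [Pi.pow_apply, id, integral_id_gaussianReal] at h
  linarith

lemma hasDerivAt_gaussianPDFReal (μ : ℝ) (v : ℝ≥0) (x : ℝ) :
    HasDerivAt (gaussianPDFReal μ v) (-((x - μ) / v) * gaussianPDFReal μ v x) x := by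
  have h := ((((hasDerivAt_id' x).sub_const μ).pow 2).neg.div_const (2 * (v : ℝ))).exp.const_mul
    (√(2 * π * v))⁻¹
  refine h.congr_deriv ?_
  simp only [gaussianPDFReal, Pi.neg_apply, Pi.pow_apply]
  ring

lemma integrable_inv_ofReal_sub {μ : Measure ℝ} [IsFiniteMeasure μ] {ζ : ℂ} (hζ : ζ.im ≠ 0) :
    Integrable (fun x : ℝ => ((x : ℂ) - ζ)⁻¹) μ := by
  refine .of_bound (by fun_prop) |ζ.im|⁻¹ (ae_of_all _ fun x => ?_)
  rw [norm_inv]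
  gcongr
  simpa using abs_im_le_norm ((x : ℂ) - ζ)

lemma plasmaZ_eq_integral_inv_sub (ζ : ℂ) :
    plasmaZ ζ = ∫ x, ((x : ℂ) - ζ)⁻¹ ∂gaussianReal 0 2⁻¹ := by
  rw [integral_gaussianReal_eq_integral_smul (by norm_num), plasmaZ, ← integral_const_mul]
  congr 1 with x
  have hπ : 2 * π * ((2⁻¹ : ℝ≥0) : ℝ) = π := by push_cast; ring
  have he : -(x - 0) ^ 2 / (2 * ((2⁻¹ : ℝ≥0) : ℝ)) = -x ^ 2 := by push_cast; ring
  rw [gaussianPDFReal, hπ, he, Complex.real_smul, ofReal_mul, ofReal_exp]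
  push_cast
  ring

lemma integral_div_sub_gaussianReal_two_inv {ζ : ℂ} (hζ : ζ.im ≠ 0) :
    ∫ x, (x : ℂ) / (ζ - x) ∂gaussianReal 0 2⁻¹ = -(1 + ζ * plasmaZ ζ) := by
  have hsplit : ∀ x : ℝ, (x : ℂ) / (ζ - x) = -1 - ζ * ((x : ℂ) - ζ)⁻¹ := fun x => by
    have hx : (x : ℂ) - ζ ≠ 0 := fun h => hζ (by simpa using (congrArg Complex.im h).symm)
    have : ζ - x ≠ 0 := sub_ne_zero.mpr (sub_ne_zero.mp hx).symm
    field_simp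
    ring
  simp_rw [hsplit]
  rw [integral_sub (integrable_const _) ((integrable_inv_ofReal_sub hζ).const_mul ζ),
    integral_const_mul, ← plasmaZ_eq_integral_inv_sub, integral_const, probReal_univ, one_smul]
  ring

lemma gaussianReal_zero_eq_map_const_mul (v : ℝ≥0) :
    gaussianReal 0 v = (gaussianReal 0 2⁻¹).map (√(2 * v) * ·) := by
  rw [gaussianReal_map_const_mul, mul_zero]
  congr
  ext
  rw [NNReal.coe_mul, NNReal.coe_mk, Real.sq_sqrt (by positivity)]
  push_cast
  ring

lemma integral_div_sub_gaussianReal {v : ℝ≥0} (hv : v ≠ 0) {w : ℂ} (hw : w.im ≠ 0) :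
    ∫ x, (x : ℂ) / (w - x) ∂gaussianReal 0 v =
      -(1 + w / √(2 * v) * plasmaZ (w / √(2 * v))) := by
  have hc : 0 < √(2 * v) := by positivity
  have hζ : (w / √(2 * v)).im ≠ 0 := by rw [div_ofReal_im]; exact div_ne_zero hw hc.ne'
  rw [gaussianReal_zero_eq_map_const_mul, integral_map (by fun_prop)
    (by fun_prop : Measurable fun x : ℝ => (x : ℂ) / (w - x)).aestronglyMeasurable,
    ← integral_div_sub_gaussianReal_two_inv hζ]
  congr 1 with y
  have : (√(2 * v) : ℂ) ≠ 0 := by exact_mod_cast hc.ne'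
  push_cast
  field_simp

lemma fPlus_eq_gaussianPDFReal_mul {vth : ℝ} {v : ℝ≥0} (hv : (v : ℝ) = vth ^ 2) (s vx vy : ℝ) :
    fPlus vth s vx vy = gaussianPDFReal 0 v vx * gaussianPDFReal (-s) v vy := by
  have hnorm : (√(2 * π * vth ^ 2))⁻¹ * (√(2 * π * vth ^ 2))⁻¹ = 1 / (2 * π * vth ^ 2) := by
    rw [← mul_inv, Real.mul_self_sqrt (by positivity), one_div]
  have hexp : -(vx ^ 2 + (vy + s) ^ 2) / (2 * vth ^ 2) =
      -(vx - 0) ^ 2 / (2 * vth ^ 2) + -(vy - -s) ^ 2 / (2 * vth ^ 2) := by ring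
  simp only [fPlus, gaussianPDFReal, hv, hexp, Real.exp_add, ← hnorm]
  ring

lemma fMinus_eq_fPlus_neg (vth u vx vy : ℝ) : fMinus vth u vx vy = fPlus vth (-u) vx vy := by
  simp only [fMinus, fPlus, sub_eq_add_neg]

lemma integral_integral_sq_mul_deriv_fPlus_div_sub {vth : ℝ} (hvth : 0 < vth) (s : ℝ) {w : ℂ}
    (hw : w.im ≠ 0) :
    ∫ vy : ℝ, ∫ vx : ℝ,
        (vy : ℂ) ^ 2 * ((deriv (fun t : ℝ => fPlus vth s t vy) vx : ℝ) : ℂ) / (w - (vx : ℂ)) =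
      (1 + w / ((√2 : ℂ) * vth) * plasmaZ (w / ((√2 : ℂ) * vth))) * (1 + (s : ℂ) ^ 2 / vth ^ 2) := by
  obtain ⟨v, hv⟩ : ∃ v : ℝ≥0, (v : ℝ) = vth ^ 2 := ⟨.mk _ (sq_nonneg vth), rfl⟩
  have hv0 : v ≠ 0 := by rw [← NNReal.coe_ne_zero, hv]; positivity
  have hintegrand : ∀ vy vx : ℝ,
      (vy : ℂ) ^ 2 * ((deriv (fun t : ℝ => fPlus vth s t vy) vx : ℝ) : ℂ) / (w - (vx : ℂ)) =
        ((gaussianPDFReal (-s) v vy * vy ^ 2 : ℝ) : ℂ) * -(vth ^ 2 : ℂ)⁻¹ *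
          (gaussianPDFReal 0 v vx • ((vx : ℂ) / (w - vx))) := fun vy vx => by
    simp_rw [fPlus_eq_gaussianPDFReal_mul hv]
    rw [((hasDerivAt_gaussianPDFReal 0 v vx).mul_const _).deriv, Complex.real_smul, hv]
    push_cast
    ring
  have hsqrt : √(2 * v) = √2 * vth := by
    rw [hv, Real.sqrt_mul zero_le_two, Real.sqrt_sq hvth.le]
  have hmoment : ∫ vy, gaussianPDFReal (-s) v vy * vy ^ 2 = vth ^ 2 + s ^ 2 := by
    simp_rw [← smul_eq_mul, ← integral_gaussianReal_eq_integral_smul hv0, integral_sq_gaussianReal,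
      hv, neg_sq]
  simp_rw [hintegrand, integral_const_mul, ← integral_gaussianReal_eq_integral_smul hv0]
  rw [integral_div_sub_gaussianReal hv0 hw, integral_mul_const, integral_mul_const,
    integral_complex_ofReal, hmoment, hsqrt]
  have : (vth : ℂ) ≠ 0 := by exact_mod_cast hvth.ne'
  push_cast
  field_simp

/-- Second integral in the kinetic Weibel dispersion derivation: for `Im w > 0` and
`ζ = w/(√2 v_th)`,
`Σ_± ∫∫ v_y² (∂f^±/∂v_x)/(w − v_x) dv_x dv_y = 2(1 + ζ Z(ζ))(1 + u²/v_th²)`. -/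
theorem weibel_second_integral
    (vth u : ℝ) (hvth : 0 < vth) (w : ℂ) (hw : 0 < w.im) :
    ((∫ vy : ℝ, ∫ vx : ℝ,
        (vy : ℂ) ^ 2 * ((deriv (fun t : ℝ => fPlus vth u t vy) vx : ℝ) : ℂ) / (w - (vx : ℂ))) +
      (∫ vy : ℝ, ∫ vx : ℝ,
        (vy : ℂ) ^ 2 * ((deriv (fun t : ℝ => fMinus vth u t vy) vx : ℝ) : ℂ) / (w - (vx : ℂ)))) =
      2 * (1 + w / ((Real.sqrt 2 : ℂ) * (vth : ℂ)) *
          plasmaZ (w / ((Real.sqrt 2 : ℂ) * (vth : ℂ)))) *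
        (1 + (u : ℂ) ^ 2 / (vth : ℂ) ^ 2) := by
  simp_rw [fMinus_eq_fPlus_neg]
  rw [integral_integral_sq_mul_deriv_fPlus_div_sub hvth u hw.ne',
    integral_integral_sq_mul_deriv_fPlus_div_sub hvth (-u) hw.ne']
  push_cast
  ring
end

section
/- Maxwell's factorization theorem: let g : ℝ → ℝ be continuous and strictly positive, and suppose there exists a function F : [0,∞) → ℝ such that g(x) g(y) g(z) = F(x² + y² + z²) for all x, y, z ∈ ℝ. Then there exist constants A > 0 and B ∈ ℝ such that g(x) = A exp(B x²) for every x ∈ ℝ. -/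
/-!
Cancelling `g 0` in the hypothesis shows that `g x` depends only on `x²`, say `g x = G (x²)`,
and that `G (s + t) G 0 = G s G t` for `s, t ≥ 0`. Hence `t ↦ log G t - log G 0` is a continuous
solution of Cauchy's equation on the half line `[0, ∞)`; extending it to an odd function gives a
continuous additive map `ℝ → ℝ`, which is linear.
-/

open Real Set

theorem eq_mul_of_map_add_of_nonneg (f : ℝ → ℝ) (hf : ContinuousOn f (Ici 0))
    (hadd : ∀ s t, 0 ≤ s → 0 ≤ t → f (s + t) = f s + f t) {t : ℝ} (ht : 0 ≤ t) :
    f t = f 1 * t := by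
  have hf0 : f 0 = 0 := by simpa using hadd 0 0 le_rfl le_rfl
  have hadd₃ : ∀ a b c : ℝ, 0 ≤ a → 0 ≤ b → 0 ≤ c → f (a + b + c) = f a + f b + f c :=
    fun a b c ha hb hc => by rw [hadd _ _ (add_nonneg ha hb) hc, hadd _ _ ha hb]
  -- `t ↦ f t⁺ - f t⁻` is additive: both sides of `(s+t)⁺ + s⁻ + t⁻ = (s+t)⁻ + s⁺ + t⁺` are sums of
  -- nonnegative terms.
  let Q : ℝ →+ ℝ := AddMonoidHom.mk' (fun t => f (max t 0) - f (max (-t) 0)) fun s t => by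
    have hsplit : max (s + t) 0 + max (-s) 0 + max (-t) 0
        = max (-(s + t)) 0 + max s 0 + max t 0 := by
      linarith [max_zero_sub_max_neg_zero_eq_self s, max_zero_sub_max_neg_zero_eq_self t,
        max_zero_sub_max_neg_zero_eq_self (s + t)]
    have := congrArg f hsplit
    rw [hadd₃ _ _ _ (le_max_right _ _) (le_max_right _ _) (le_max_right _ _),
      hadd₃ _ _ _ (le_max_right _ _) (le_max_right _ _) (le_max_right _ _)] at this
    linarith
  have hQ : Continuous Q :=
    (hf.comp_continuous (continuous_id.max continuous_const) fun x => le_max_right x 0).sub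
      (hf.comp_continuous (continuous_neg.max continuous_const) fun x => le_max_right (-x) 0)
  have hQf : ∀ x, 0 ≤ x → Q x = f x := fun x hx => by
    simp [Q, hx, hf0]
  calc f t = Q (t • 1) := by rw [smul_eq_mul, mul_one, hQf t ht]
    _ = f 1 * t := by rw [map_real_smul Q hQ, hQf 1 zero_le_one, smul_eq_mul, mul_comm]

theorem exists_eq_mul_exp_of_map_add_mul (G : ℝ → ℝ) (hG : ContinuousOn G (Ici 0))
    (hpos : ∀ t, 0 ≤ t → 0 < G t)
    (hmul : ∀ s t, 0 ≤ s → 0 ≤ t → G (s + t) * G 0 = G s * G t) :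
    ∃ B, ∀ t, 0 ≤ t → G t = G 0 * exp (B * t) := by
  set f : ℝ → ℝ := fun t => log (G t) - log (G 0)
  have hf : ContinuousOn f (Ici 0) :=
    (hG.log fun t ht => (hpos t ht).ne').sub continuousOn_const
  have hadd : ∀ s t, 0 ≤ s → 0 ≤ t → f (s + t) = f s + f t := fun s t hs ht => by
    have := congrArg log (hmul s t hs ht)
    rw [log_mul (hpos _ (add_nonneg hs ht)).ne' (hpos 0 le_rfl).ne',
      log_mul (hpos s hs).ne' (hpos t ht).ne'] at this
    linarith
  refine ⟨f 1, fun t ht => ?_⟩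
  have hlog : log (G t) = log (G 0) + f 1 * t := by
    linarith [eq_mul_of_map_add_of_nonneg f hf hadd ht]
  rw [← exp_log (hpos t ht), hlog, exp_add, exp_log (hpos 0 le_rfl)]

section TripleProduct

variable {g F : ℝ → ℝ} (hg0 : g 0 ≠ 0)
  (hF : ∀ x y z : ℝ, g x * g y * g z = F (x ^ 2 + y ^ 2 + z ^ 2))
include hg0 hF

theorem apply_eq_of_sq_eq {x y : ℝ} (hxy : x ^ 2 = y ^ 2) : g x = g y := by
  have h := (hF x 0 0).trans ((hxy ▸ hF y 0 0).symm)
  exact mul_right_cancel₀ hg0 (mul_right_cancel₀ hg0 h)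

theorem apply_sqrt_add_mul {s t : ℝ} (hs : 0 ≤ s) (ht : 0 ≤ t) :
    g √(s + t) * g 0 = g √s * g √t := by
  have h : g √(s + t) * g 0 * g 0 = g √s * g √t * g 0 := by
    rw [hF, hF, sq_sqrt hs, sq_sqrt ht, sq_sqrt (add_nonneg hs ht)]
    norm_num
  exact mul_right_cancel₀ hg0 h

end TripleProduct

/-- Maxwell's factorization theorem: if `g : ℝ → ℝ` is continuous and strictly positive,
and `g(x) g(y) g(z)` depends only on `x² + y² + z²`, then `g(x) = A exp(B x²)` for some
constants `A > 0` and `B`. -/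
theorem maxwell_factorization
    (g : ℝ → ℝ) (hg : Continuous g) (hpos : ∀ x, 0 < g x)
    (F : ℝ → ℝ) (hF : ∀ x y z : ℝ, g x * g y * g z = F (x ^ 2 + y ^ 2 + z ^ 2)) :
    ∃ A B : ℝ, 0 < A ∧ ∀ x, g x = A * Real.exp (B * x ^ 2) := by
  have hg0 : g 0 ≠ 0 := (hpos 0).ne'
  obtain ⟨B, hB⟩ := exists_eq_mul_exp_of_map_add_mul (fun t => g √t)
    (hg.comp continuous_sqrt).continuousOn (fun t _ => hpos √t)
    (fun s t hs ht => by simpa using apply_sqrt_add_mul hg0 hF hs ht)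
  refine ⟨g 0, B, hpos 0, fun x => ?_⟩
  rw [apply_eq_of_sq_eq hg0 hF (sq_sqrt (sq_nonneg x)).symm]
  simpa using hB (x ^ 2) (sq_nonneg x)
end

section
/- Characterization of collisional summation invariants: let ψ : ℝ³ → ℝ be continuous, and suppose that for all v, v₁, v′, v₁′ ∈ ℝ³ satisfying the binary-collision conservation laws v + v₁ = v′ + v₁′ and ‖v‖² + ‖v₁‖² = ‖v′‖² + ‖v₁′‖², one has ψ(v) + ψ(v₁) = ψ(v′) + ψ(v₁′). Then there exist a ∈ ℝ, b ∈ ℝ³, and c ∈ ℝ such that ψ(v) = a + b·v + c‖v‖² for every v ∈ ℝ³. -/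
/-!
Subtracting `ψ 0`, the collision `(x + y, 0) ↦ (x, y)` with `x ⊥ y` makes `ψ` orthogonally
additive, and so are its even and odd parts. For the even part `f`, `u + v ⊥ u - v` when
`‖u‖ = ‖v‖` gives `f (2u) = f (u + v) + f (u - v) = f (2v)`, so `f x = φ (‖x‖²)`; Pythagoras
makes `φ` additive on `[0, ∞)`, hence linear by continuity. For the odd part, a vector `w ⊥ u`
with `‖w‖ = ‖u‖` (dimension at least two) makes it additive, hence linear, on the line `ℝ u`;
splitting `y` along `x` and `x^⊥` then makes it additive, so it is a continuous linear form
`⟪b, ·⟫`.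
-/

open Module
open scoped RealInnerProductSpace

theorem Real.apply_eq_mul_of_continuous_of_add_of_nonneg {g : ℝ → ℝ} (hg : Continuous g)
    (hadd : ∀ s t, 0 ≤ s → 0 ≤ t → g (s + t) = g s + g t) {t : ℝ} (ht : 0 ≤ t) :
    g t = t * g 1 := by
  have hadd₃ : ∀ a b c, 0 ≤ a → 0 ≤ b → 0 ≤ c → g (a + b + c) = g a + g b + g c :=
    fun a b c ha hb hc => by rw [hadd _ _ (add_nonneg ha hb) hc, hadd _ _ ha hb]
  -- `t ↦ g t⁺ - g t⁻` extends `g` from `[0, ∞)` to an additive function on `ℝ`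
  let G : ℝ →+ ℝ := AddMonoidHom.mk' (fun t => g t⁺ - g t⁻) fun s t => by
    have hsum : (s + t)⁺ + s⁻ + t⁻ = (s + t)⁻ + s⁺ + t⁺ := by
      linarith [posPart_sub_negPart (s + t), posPart_sub_negPart s, posPart_sub_negPart t]
    have := congrArg g hsum
    rw [hadd₃ _ _ _ (posPart_nonneg _) (negPart_nonneg _) (negPart_nonneg _),
      hadd₃ _ _ _ (negPart_nonneg _) (posPart_nonneg _) (posPart_nonneg _)] at this
    linarith
  have hG : Continuous G := (hg.comp continuous_posPart).sub (hg.comp continuous_negPart)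
  have hG_eq : ∀ s, 0 ≤ s → G s = g s := fun s hs => by
    simp [G, posPart_eq_self.2 hs, negPart_eq_zero.2 hs, by simpa using hadd 0 0 le_rfl le_rfl]
  simpa [hG_eq t ht, hG_eq 1 zero_le_one] using map_real_smul G hG t 1

variable {E G : Type*} [NormedAddCommGroup E] [InnerProductSpace ℝ E] [AddCommGroup G]

theorem exists_inner_eq_zero_norm_eq (hE : 2 ≤ finrank ℝ E) (u : E) :
    ∃ w : E, ⟪u, w⟫ = 0 ∧ ‖w‖ = ‖u‖ := by
  have : FiniteDimensional ℝ E := finite_of_finrank_pos (by omega)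
  have hlt : (ℝ ∙ u) ≠ ⊤ := by
    refine (span_lt_top_of_card_lt_finrank ?_).ne
    rw [Set.toFinset_singleton, Finset.card_singleton]
    omega
  obtain ⟨w₀, hw₀, hw₀_ne⟩ := Submodule.exists_mem_ne_zero_of_ne_bot
    (mt Submodule.orthogonal_eq_bot_iff.1 hlt)
  refine ⟨(‖u‖ / ‖w₀‖) • w₀, ?_, ?_⟩
  · rw [real_inner_smul_right, Submodule.mem_orthogonal_singleton_iff_inner_right.1 hw₀, mul_zero]
  · rw [norm_smul, Real.norm_eq_abs, abs_div, abs_norm, abs_norm,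
      div_mul_cancel₀ _ (norm_ne_zero_iff.2 hw₀_ne)]

def OrthogonallyAdditive (f : E → G) : Prop :=
  ∀ x y, ⟪x, y⟫ = 0 → f (x + y) = f x + f y

namespace OrthogonallyAdditive

section

variable {f g : E → G}

theorem map_zero (hf : OrthogonallyAdditive f) : f 0 = 0 := by
  simpa using hf 0 0 (inner_zero_left _)

theorem comp_neg (hf : OrthogonallyAdditive f) : OrthogonallyAdditive fun x => f (-x) :=
  fun x y h => by simp only [neg_add]; exact hf (-x) (-y) (by simpa using h)

theorem add (hf : OrthogonallyAdditive f) (hg : OrthogonallyAdditive g) :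
    OrthogonallyAdditive (f + g) :=
  fun x y h => by simp only [Pi.add_apply, hf x y h, hg x y h]; abel

theorem sub (hf : OrthogonallyAdditive f) (hg : OrthogonallyAdditive g) :
    OrthogonallyAdditive (f - g) :=
  fun x y h => by simp only [Pi.sub_apply, hf x y h, hg x y h]; abel

end

variable {f : E → ℝ}

theorem eq_of_norm_eq_of_even (hf : OrthogonallyAdditive f) (heven : ∀ x, f (-x) = f x)
    {u v : E} (huv : ‖u‖ = ‖v‖) : f u = f v := by
  obtain ⟨a, rfl⟩ : ∃ a, u = (2 : ℝ) • a := ⟨(2 : ℝ)⁻¹ • u, by module⟩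
  obtain ⟨b, rfl⟩ : ∃ b, v = (2 : ℝ) • b := ⟨(2 : ℝ)⁻¹ • v, by module⟩
  have hab : ‖a‖ = ‖b‖ := by simpa [norm_smul] using huv
  have h₁ := hf (a + b) (a - b) ((real_inner_add_sub_eq_zero_iff a b).2 hab)
  have h₂ := hf (b + a) (b - a) ((real_inner_add_sub_eq_zero_iff b a).2 hab.symm)
  rw [add_comm b a, ← neg_sub a b, heven] at h₂
  rw [show a + b + (a - b) = (2 : ℝ) • a by module] at h₁
  rw [show a + b + -(a - b) = (2 : ℝ) • b by module] at h₂
  rw [h₁, h₂]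

theorem exists_eq_mul_norm_sq_of_even (hf : OrthogonallyAdditive f) (hcont : Continuous f)
    (heven : ∀ x, f (-x) = f x) (hE : 2 ≤ finrank ℝ E) : ∃ c : ℝ, ∀ x, f x = c * ‖x‖ ^ 2 := by
  have : Nontrivial E := nontrivial_of_finrank_pos (R := ℝ) (by omega)
  obtain ⟨e, he⟩ := exists_norm_eq E zero_le_one
  obtain ⟨e', he_e', he'⟩ := exists_inner_eq_zero_norm_eq hE e
  set φ : ℝ → ℝ := fun s => f (√s • e)
  have hφ_cont : Continuous φ := hcont.comp (Real.continuous_sqrt.smul continuous_const)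
  have hφ_add : ∀ s t, 0 ≤ s → 0 ≤ t → φ (s + t) = φ s + φ t := fun s t hs ht => by
    have horth : ⟪√s • e, √t • e'⟫ = 0 := by
      simp [real_inner_smul_left, real_inner_smul_right, he_e']
    have hsum : ‖√(s + t) • e‖ = ‖√s • e + √t • e'‖ := by
      rw [← sq_eq_sq₀ (norm_nonneg _) (norm_nonneg _), norm_add_sq_real, horth]
      simp [norm_smul, he, he', hs, ht, add_nonneg hs ht]
    calc φ (s + t) = f (√s • e + √t • e') := eq_of_norm_eq_of_even hf heven hsum
      _ = f (√s • e) + f (√t • e') := hf _ _ horth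
      _ = φ s + φ t := congrArg _ (eq_of_norm_eq_of_even hf heven (by simp [norm_smul, he, he']))
  refine ⟨φ 1, fun x => ?_⟩
  calc f x = φ (‖x‖ ^ 2) := eq_of_norm_eq_of_even hf heven (by simp [norm_smul, he])
    _ = ‖x‖ ^ 2 * φ 1 :=
      Real.apply_eq_mul_of_continuous_of_add_of_nonneg hφ_cont hφ_add (by positivity)
    _ = φ 1 * ‖x‖ ^ 2 := mul_comm _ _

theorem map_smul_of_odd (hf : OrthogonallyAdditive f) (hcont : Continuous f)
    (hodd : ∀ x, f (-x) = -f x) {u w : E} (huw : ⟪u, w⟫ = 0) (hw : ‖w‖ = ‖u‖) (t : ℝ) :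
    f (t • u) = t * f u := by
  set g : ℝ → ℝ := fun s => f (s • u)
  have hg_cont : Continuous g := hcont.comp (continuous_id.smul continuous_const)
  have hperp : ∀ a b : ℝ, ⟪a • u, b • w⟫ = 0 := fun a b => by
    simp [real_inner_smul_left, real_inner_smul_right, huw]
  have hg_add : ∀ s t, 0 ≤ s → 0 ≤ t → g (s + t) = g s + g t := fun s t hs ht => by
    set β := √(s * t)
    have horth : ⟪s • u + β • w, t • u + (-β) • w⟫ = 0 := by
      simp only [inner_add_left, inner_add_right, hperp, real_inner_smul_left,
        real_inner_smul_right, real_inner_comm u w, huw, real_inner_self_eq_norm_sq, hw]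
      linear_combination (-‖u‖ ^ 2) * Real.mul_self_sqrt (mul_nonneg hs ht)
    calc g (s + t) = f (s • u + β • w + (t • u + (-β) • w)) := by
          show f ((s + t) • u) = _; congr 1; module
      _ = f (s • u) + f (β • w) + (f (t • u) + f ((-β) • w)) := by
        rw [hf _ _ horth, hf _ _ (hperp s β), hf _ _ (hperp t (-β))]
      _ = g s + g t := by rw [neg_smul, hodd]; ring
  rcases le_total 0 t with ht | ht
  · simpa [g] using Real.apply_eq_mul_of_continuous_of_add_of_nonneg hg_cont hg_add ht
  · have h := Real.apply_eq_mul_of_continuous_of_add_of_nonneg hg_cont hg_add (neg_nonneg.2 ht)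
    simp only [g, neg_smul, hodd, one_smul] at h
    linarith

theorem map_add_of_map_smul (hf : OrthogonallyAdditive f)
    (hsmul : ∀ (t : ℝ) x, f (t • x) = t * f x) (x y : E) : f (x + y) = f x + f y := by
  rcases eq_or_ne x 0 with rfl | hx
  · simp [hf.map_zero]
  set α := ⟪x, y⟫ / ‖x‖ ^ 2
  have hperp : ∀ c : ℝ, ⟪c • x, y - α • x⟫ = 0 := fun c => by
    rw [real_inner_smul_left, inner_sub_right, real_inner_smul_right, real_inner_self_eq_norm_sq,
      div_mul_cancel₀ _ (by simpa using hx), sub_self, mul_zero]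
  calc f (x + y) = f ((1 + α) • x + (y - α • x)) := by congr 1; module
    _ = f x + f (α • x + (y - α • x)) := by
      rw [hf _ _ (hperp _), hf _ _ (hperp _), hsmul, hsmul]
      ring
    _ = f x + f y := by rw [add_sub_cancel]

theorem exists_eq_inner_of_odd (hf : OrthogonallyAdditive f) (hcont : Continuous f)
    (hodd : ∀ x, f (-x) = -f x) (hE : 2 ≤ finrank ℝ E) : ∃ b : E, ∀ x, f x = ⟪b, x⟫ := by
  have : FiniteDimensional ℝ E := finite_of_finrank_pos (by omega)
  have hsmul : ∀ (t : ℝ) x, f (t • x) = t * f x := fun t x => by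
    obtain ⟨w, hxw, hw⟩ := exists_inner_eq_zero_norm_eq hE x
    exact hf.map_smul_of_odd hcont hodd hxw hw t
  let L : E →+ ℝ := AddMonoidHom.mk' f (hf.map_add_of_map_smul hsmul)
  refine ⟨(InnerProductSpace.toDual ℝ E).symm (L.toRealLinearMap hcont), fun x => ?_⟩
  rw [InnerProductSpace.toDual_symm_apply]
  rfl

theorem exists_eq_inner_add_mul_norm_sq (hf : OrthogonallyAdditive f) (hcont : Continuous f)
    (hE : 2 ≤ finrank ℝ E) : ∃ (b : E) (c : ℝ), ∀ x, f x = ⟪b, x⟫ + c * ‖x‖ ^ 2 := by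
  have hcont_neg : Continuous fun x => f (-x) := hcont.comp continuous_neg
  obtain ⟨c, hc⟩ := (hf.add hf.comp_neg).exists_eq_mul_norm_sq_of_even (hcont.add hcont_neg)
    (fun x => by simp [add_comm]) hE
  obtain ⟨b, hb⟩ := (hf.sub hf.comp_neg).exists_eq_inner_of_odd (hcont.sub hcont_neg)
    (fun x => by simp) hE
  refine ⟨(2 : ℝ)⁻¹ • b, c / 2, fun x => ?_⟩
  have h_even := hc x
  have h_odd := hb x
  simp only [Pi.add_apply, Pi.sub_apply] at h_even h_odd
  rw [real_inner_smul_left]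
  linarith

end OrthogonallyAdditive

def IsSummationInvariant (ψ : E → ℝ) : Prop :=
  ∀ v v₁ v' v₁' : E, v + v₁ = v' + v₁' → ‖v‖ ^ 2 + ‖v₁‖ ^ 2 = ‖v'‖ ^ 2 + ‖v₁'‖ ^ 2 →
    ψ v + ψ v₁ = ψ v' + ψ v₁'

namespace IsSummationInvariant

variable {ψ : E → ℝ}

theorem orthogonallyAdditive_sub_apply_zero (hψ : IsSummationInvariant ψ) :
    OrthogonallyAdditive fun x => ψ x - ψ 0 := fun x y h => by
  have := hψ (x + y) 0 x y (add_zero _) (by rw [norm_add_sq_real, h]; simp)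
  linarith

theorem exists_eq_add_inner_add_mul_norm_sq (hψ : IsSummationInvariant ψ) (hcont : Continuous ψ)
    (hE : 2 ≤ finrank ℝ E) : ∃ (a : ℝ) (b : E) (c : ℝ), ∀ v, ψ v = a + ⟪b, v⟫ + c * ‖v‖ ^ 2 := by
  obtain ⟨b, c, h⟩ := hψ.orthogonallyAdditive_sub_apply_zero.exists_eq_inner_add_mul_norm_sq
    (hcont.sub continuous_const) hE
  exact ⟨ψ 0, b, c, fun v => by linarith [h v]⟩

end IsSummationInvariant

/-- Characterization of collisional summation invariants: a continuous `ψ : ℝ³ → ℝ`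
whose two-particle sum is preserved by every elastic binary collision (conservation of
momentum and kinetic energy) is of the form `ψ(v) = a + b·v + c‖v‖²`. -/
theorem summation_invariant_characterization
    (ψ : (Fin 3 → ℝ) → ℝ) (hψ : Continuous ψ)
    (hinv : ∀ v v₁ v' v₁' : Fin 3 → ℝ,
      v + v₁ = v' + v₁' →
      (∑ i, (v i) ^ 2) + (∑ i, (v₁ i) ^ 2) = (∑ i, (v' i) ^ 2) + (∑ i, (v₁' i) ^ 2) →
      ψ v + ψ v₁ = ψ v' + ψ v₁') :
    ∃ (a : ℝ) (b : Fin 3 → ℝ) (c : ℝ),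
      ∀ v : Fin 3 → ℝ, ψ v = a + (∑ i, b i * v i) + c * ∑ i, (v i) ^ 2 := by
  have hinv' : IsSummationInvariant fun x : EuclideanSpace ℝ (Fin 3) => ψ x.ofLp :=
    fun v v₁ v' v₁' hmom hen => hinv _ _ _ _ (by simpa using congrArg WithLp.ofLp hmom)
      (by simpa only [EuclideanSpace.real_norm_sq_eq] using hen)
  obtain ⟨a, b, c, h⟩ := hinv'.exists_eq_add_inner_add_mul_norm_sq
    (hψ.comp (PiLp.continuous_ofLp 2 _)) (by simp)
  refine ⟨a, b.ofLp, c, fun v => ?_⟩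
  simpa [EuclideanSpace.real_norm_sq_eq, PiLp.inner_apply, mul_comm] using h (WithLp.toLp 2 v)
end

section
/- Dimension of the Serendipity polynomial space: for integers d ≥ 1 and p ≥ 1, the number of multi-indices a ∈ ℕ^d whose superlinear order Σ_{j : a_j ≥ 2} a_j is at most p equals Σ_{i=0}^{min(d, ⌊p/2⌋)} 2^{d−i} · C(d, i) · C(p − i, i), where C denotes the binomial coefficient. -/
/-!
Sort the multi-indices by the set `S` of coordinates where `a j ≥ 2`. On such a fiber the
coordinates outside `S` are free in `{0, 1}`, giving `2 ^ (d - |S|)`, while the coordinates in `S`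
are `≥ 2` with sum `≤ p`; subtracting `2` from each leaves a tuple with sum `≤ p - 2|S|`, which
stars and bars counts as `C(p - |S|, |S|)`. Grouping the subsets `S` by size gives the
factor `C(d, i)`, and the summands with `2i > p` vanish.
-/

open Finset

variable {ι : Type*} [Fintype ι]

def superlinearOrder (a : ι → ℕ) : ℕ := ∑ j, if 2 ≤ a j then a j else 0

def superlinearSupport (a : ι → ℕ) : Finset ι := {j | 2 ≤ a j}

theorem superlinearOrder_eq_sum_superlinearSupport (a : ι → ℕ) :
    superlinearOrder a = ∑ j ∈ superlinearSupport a, a j :=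
  (sum_filter _ _).symm

theorem finite_setOf_superlinearOrder_le (p : ℕ) :
    {a : ι → ℕ | superlinearOrder a ≤ p}.Finite := by
  refine (Set.Finite.pi fun _ : ι => Set.finite_Iic (p + 1)).subset fun a ha j _ => ?_
  by_cases hj : 2 ≤ a j
  · have hj' : j ∈ superlinearSupport a := mem_filter.mpr ⟨mem_univ j, hj⟩
    have : a j ≤ superlinearOrder a := by
      rw [superlinearOrder_eq_sum_superlinearSupport]
      exact single_le_sum (fun _ _ => Nat.zero_le _) hj'
    exact (this.trans ha).trans p.le_succ
  · exact (by omega : a j ≤ p + 1)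

theorem card_tuple_sum_le (σ : Type*) [Fintype σ] (m : ℕ) :
    Nat.card {g : σ → ℕ // ∑ j, g j ≤ m} = (m + Fintype.card σ).choose (Fintype.card σ) := by
  classical
  -- a slack coordinate turns `∑ ≤ m` into `∑ = m`, i.e. into `Sym (Option σ) m`
  let slack : {g : σ → ℕ // ∑ j, g j ≤ m} ≃ {g : Option σ → ℕ // ∑ j, g j = m} :=
    { toFun := fun g => ⟨fun o => o.elim (m - ∑ j, g.1 j) g.1, by
        have := g.2; rw [Fintype.sum_option]; simp only [Option.elim]; omega⟩
      invFun := fun g => ⟨fun j => g.1 (some j), by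
        have := g.2; rw [Fintype.sum_option] at this; exact (show ∑ j, g.1 (some j) ≤ m by omega)⟩
      left_inv := fun _ => rfl
      right_inv := fun g => by
        have := g.2
        rw [Fintype.sum_option] at this
        ext (_ | j)
        · simp only [Option.elim]; omega
        · rfl }
  rw [Nat.card_congr (slack.trans (Sym.equivNatSumOfFintype _ m).symm), Nat.card_eq_fintype_card,
    Sym.card_sym_eq_choose, Fintype.card_option,
    show Fintype.card σ + 1 + m - 1 = m + Fintype.card σ by omega, Nat.choose_symm_add]

theorem card_tuple_two_le_sum_le (σ : Type*) [Fintype σ] (p : ℕ) :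
    Nat.card {f : σ → ℕ // (∀ j, 2 ≤ f j) ∧ ∑ j, f j ≤ p} =
      (p - Fintype.card σ).choose (Fintype.card σ) := by
  set k := Fintype.card σ
  have sum_add_two (g : σ → ℕ) : ∑ j, (g j + 2) = ∑ j, g j + 2 * k := by
    rw [sum_add_distrib, sum_const, Finset.card_univ, smul_eq_mul, mul_comm]
  let shift : {f : σ → ℕ // (∀ j, 2 ≤ f j) ∧ ∑ j, f j ≤ p} ≃ {g : σ → ℕ // ∑ j, g j + 2 * k ≤ p} :=
    { toFun := fun f => ⟨fun j => f.1 j - 2, by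
        rw [← sum_add_two]
        convert f.2.2 using 2 with j
        exact Nat.sub_add_cancel (f.2.1 j)⟩
      invFun := fun g => ⟨fun j => g.1 j + 2, fun _ => Nat.le_add_left _ _,
        (sum_add_two g.1).trans_le g.2⟩
      left_inv := fun f => Subtype.ext <| funext fun j => Nat.sub_add_cancel (f.2.1 j)
      right_inv := fun _ => rfl }
  rw [Nat.card_congr shift]
  by_cases hk : 2 * k ≤ p
  · rw [Nat.card_congr (Equiv.subtypeEquivRight fun g => Nat.le_sub_iff_add_le hk).symm,
      card_tuple_sum_le, show p - 2 * k + k = p - k by omega]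
  · have : IsEmpty {g : σ → ℕ // ∑ j, g j + 2 * k ≤ p} := ⟨fun g => hk (by have := g.2; omega)⟩
    rw [Nat.card_of_isEmpty, Nat.choose_eq_zero_of_lt (by omega)]

theorem superlinearSupport_eq_iff {a : ι → ℕ} {S : Finset ι} :
    superlinearSupport a = S ↔ (∀ j ∈ S, 2 ≤ a j) ∧ ∀ j ∉ S, a j < 2 := by
  simp only [superlinearSupport, Finset.ext_iff, mem_filter, mem_univ, true_and]
  grind

theorem superlinearOrder_le_and_superlinearSupport_eq_iff (a : ι → ℕ) (S : Finset ι) (p : ℕ) :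
    superlinearOrder a ≤ p ∧ superlinearSupport a = S ↔
      ((∀ j : S, 2 ≤ a j) ∧ ∑ j : S, a j ≤ p) ∧ ∀ j : {j // j ∉ S}, a j < 2 := by
  constructor
  · rintro ⟨ha, rfl⟩
    obtain ⟨h2, hlt⟩ := (superlinearSupport_eq_iff (a := a)).mp rfl
    refine ⟨⟨fun j => h2 j j.2, ?_⟩, fun j => hlt j j.2⟩
    rwa [superlinearOrder_eq_sum_superlinearSupport, ← sum_coe_sort] at ha
  · rintro ⟨⟨h2, hsum⟩, hlt⟩
    have hS : superlinearSupport a = S :=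
      superlinearSupport_eq_iff.mpr ⟨fun j hj => h2 ⟨j, hj⟩, fun j hj => hlt ⟨j, hj⟩⟩
    refine ⟨?_, hS⟩
    rwa [superlinearOrder_eq_sum_superlinearSupport, hS, ← sum_coe_sort]

def superlinearFiberEquiv [DecidableEq ι] (S : Finset ι) (p : ℕ) :
    {a : ι → ℕ // superlinearOrder a ≤ p ∧ superlinearSupport a = S} ≃
      {f : S → ℕ // (∀ j, 2 ≤ f j) ∧ ∑ j, f j ≤ p} × ({j // j ∉ S} → Fin 2) :=
  ((Equiv.piEquivPiSubtypeProd (· ∈ S) fun _ => ℕ).subtypeEquiv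
      (superlinearOrder_le_and_superlinearSupport_eq_iff · S p)).trans <|
    Equiv.subtypeProdEquivProd.trans <| (Equiv.refl _).prodCongr <|
      Equiv.subtypePiEquivPi.trans <| Equiv.piCongrRight fun _ => Fin.equivSubtype.symm

theorem card_superlinearFiber [DecidableEq ι] (S : Finset ι) (p : ℕ) :
    Nat.card {a : ι → ℕ // superlinearOrder a ≤ p ∧ superlinearSupport a = S} =
      2 ^ (Fintype.card ι - #S) * (p - #S).choose #S := by
  rw [Nat.card_congr (superlinearFiberEquiv S p), Nat.card_prod, card_tuple_two_le_sum_le,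
    Nat.card_eq_fintype_card (α := _ → Fin 2), Fintype.card_fun, Fintype.card_fin,
    Fintype.card_subtype_compl, Fintype.card_coe, mul_comm]

theorem card_superlinearOrder_le [DecidableEq ι] (p : ℕ) :
    Nat.card {a : ι → ℕ // superlinearOrder a ≤ p} =
      ∑ i ∈ range (Fintype.card ι + 1),
        2 ^ (Fintype.card ι - i) * (Fintype.card ι).choose i * (p - i).choose i := by
  have : Finite {a : ι → ℕ // superlinearOrder a ≤ p} :=
    (finite_setOf_superlinearOrder_le p).to_subtype
  rw [← Nat.card_congr (Equiv.sigmaFiberEquiv fun a : {a // superlinearOrder a ≤ p} =>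
      superlinearSupport a.1), Nat.card_sigma,
    sum_congr rfl fun S _ => (Nat.card_congr (Equiv.subtypeSubtypeEquivSubtypeInter
      (superlinearOrder · ≤ p) (superlinearSupport · = S))).trans (card_superlinearFiber S p),
    ← powerset_univ,
    sum_powerset_apply_card fun i => 2 ^ (Fintype.card ι - i) * (p - i).choose i, card_univ]
  refine sum_congr rfl fun i _ => ?_
  rw [smul_eq_mul, mul_left_comm, mul_assoc]

theorem serendipity_dimension_general (d p : ℕ) :
    {a : Fin d → ℕ | (∑ j, if 2 ≤ a j then a j else 0) ≤ p}.ncard =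
      ∑ i ∈ Finset.range (min d (p / 2) + 1),
        2 ^ (d - i) * Nat.choose d i * Nat.choose (p - i) i := by
  rw [← Nat.card_coe_set_eq]
  refine (card_superlinearOrder_le p).trans ?_
  rw [Fintype.card_fin]
  refine (sum_subset (fun i hi => ?_) fun i hi hi' => ?_).symm
  · simp only [mem_range] at hi ⊢
    omega
  · simp only [mem_range] at hi hi'
    rw [Nat.choose_eq_zero_of_lt (n := p - i) (by omega), mul_zero]

/-- Dimension of the Serendipity polynomial space: for `d ≥ 1` and `p ≥ 1`, the number
of multi-indices `a ∈ ℕ^d` whose superlinear order `Σ_{j : a_j ≥ 2} a_j` is at most `p`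
equals `Σ_{i=0}^{min(d, ⌊p/2⌋)} 2^{d−i} C(d,i) C(p−i,i)`. -/
theorem serendipity_dimension (d p : ℕ) (hd : 1 ≤ d) (hp : 1 ≤ p) :
    {a : Fin d → ℕ | (∑ j, if 2 ≤ a j then a j else 0) ≤ p}.ncard =
      ∑ i ∈ Finset.range (min d (p / 2) + 1),
        2 ^ (d - i) * Nat.choose d i * Nat.choose (p - i) i :=
  serendipity_dimension_general d p
end

section
/- Bohm sheath criterion: for M > 0 define g_M : [0,∞) → ℝ by g_M(χ) = M² ( √(1 + 2χ/M²) − 1 ) + e^{−χ} − 1. Then: (i) if M ≥ 1, then g_M(χ) ≥ 0 for every χ ≥ 0; and (ii) conversely, if there exists δ > 0 such that g_M(χ) ≥ 0 for all χ ∈ (0, δ), then M ≥ 1. -/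
/-!
The ion term `a (√(1 + 2χ/a) - 1) = 2χ / (√(1 + 2χ/a) + 1)` is increasing in `a = M²`, so for
`M ≥ 1` it suffices to treat `M = 1`, where `√(1 + 2χ) + e^{-χ} ≥ 2` is the bound
`-log (1 - w) ≥ w + w²/2` at `w = 1 - e^{-χ}`. Conversely, with `s = √(1 + 2χ/M²)` (so that
`χ = M² (s² - 1) / 2`) and `e^{-χ} ≤ 1 - χ + χ²/2`, one gets
`g_M(χ) ≤ M² (s - 1)² (M² (s + 1)² - 4) / 8`, which is negative once `0 < χ < 2 (1 - M)`.
-/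

open Real

noncomputable def sheathFunction (M χ : ℝ) : ℝ :=
  M ^ 2 * (√(1 + 2 * χ / M ^ 2) - 1) + exp (-χ) - 1

lemma exp_neg_le_one_sub_add_sq_div_two {x : ℝ} (hx : 0 ≤ x) :
    exp (-x) ≤ 1 - x + x ^ 2 / 2 := by
  have hq : 0 < 1 - x + x ^ 2 / 2 := by nlinarith [sq_nonneg (x - 1)]
  rw [exp_neg, inv_le_iff_one_le_mul₀ (exp_pos x)]
  -- `(1 - x + x²/2)(1 + x + x²/2) = 1 + x⁴/4`
  calc (1 : ℝ) ≤ (1 - x + x ^ 2 / 2) * (1 + x + x ^ 2 / 2) := by nlinarith [pow_nonneg hx 4]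
    _ ≤ (1 - x + x ^ 2 / 2) * exp x := by gcongr; exact quadratic_le_exp_of_nonneg hx

lemma add_sq_div_two_le_neg_log_one_sub {w : ℝ} (h0 : 0 ≤ w) (h1 : w < 1) :
    w + w ^ 2 / 2 ≤ -log (1 - w) := by
  have hsum := hasSum_pow_div_log_of_abs_lt_one (abs_lt.mpr ⟨by linarith, h1⟩)
  have h := sum_le_hasSum (Finset.range 2) (fun n _ => by positivity) hsum
  norm_num [Finset.sum_range_succ] at h
  exact h

lemma two_sub_exp_neg_le_sqrt_one_add_two_mul {x : ℝ} (hx : 0 ≤ x) :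
    2 - exp (-x) ≤ √(1 + 2 * x) := by
  have hv : exp (-x) ≤ 1 := exp_le_one_iff.mpr (neg_nonpos.mpr hx)
  have h := add_sq_div_two_le_neg_log_one_sub (w := 1 - exp (-x)) (by linarith) (by simp [exp_pos])
  rw [sub_sub_cancel, log_exp, neg_neg] at h
  rw [le_sqrt (by linarith) (by linarith)]
  nlinarith

lemma mul_sqrt_one_add_div_sub_one {a χ : ℝ} (ha : 0 < a) (hχ : 0 ≤ χ) :
    a * (√(1 + 2 * χ / a) - 1) = 2 * χ / (√(1 + 2 * χ / a) + 1) := by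
  have hs : a * (√(1 + 2 * χ / a) ^ 2 - 1) = 2 * χ := by
    rw [sq_sqrt (by positivity)]; field_simp; ring
  rw [eq_div_iff (by positivity)]
  linear_combination hs

lemma mul_sqrt_one_add_div_sub_one_le {a b χ : ℝ} (ha : 0 < a) (hab : a ≤ b) (hχ : 0 ≤ χ) :
    a * (√(1 + 2 * χ / a) - 1) ≤ b * (√(1 + 2 * χ / b) - 1) := by
  rw [mul_sqrt_one_add_div_sub_one ha hχ, mul_sqrt_one_add_div_sub_one (ha.trans_le hab) hχ]
  gcongr

theorem sheathFunction_nonneg {M χ : ℝ} (hM : 1 ≤ M) (hχ : 0 ≤ χ) : 0 ≤ sheathFunction M χ := by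
  have hion : √(1 + 2 * χ) - 1 ≤ M ^ 2 * (√(1 + 2 * χ / M ^ 2) - 1) := by
    simpa using mul_sqrt_one_add_div_sub_one_le one_pos (one_le_pow₀ hM (n := 2)) hχ
  unfold sheathFunction
  linarith [two_sub_exp_neg_le_sqrt_one_add_two_mul hχ]

theorem sheathFunction_neg {M χ : ℝ} (hM : 0 < M) (hχ : 0 < χ) (hχM : χ < 2 * (1 - M)) :
    sheathFunction M χ < 0 := by
  set s := √(1 + 2 * χ / M ^ 2)
  have hs : s ^ 2 = 1 + 2 * χ / M ^ 2 := sq_sqrt (by positivity)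
  have hχs : χ = M ^ 2 * (s ^ 2 - 1) / 2 := by rw [hs]; field_simp; ring
  have hs1 : 1 < s := lt_sqrt_of_sq_lt (by nlinarith [div_pos (mul_pos two_pos hχ) (pow_pos hM 2)])
  have hMs : M * (s + 1) < 2 := by
    have h : s < (2 - M) / M := by
      rw [sqrt_lt' (by bound), div_pow, lt_div_iff₀ (by positivity)]
      field_simp
      nlinarith
    rw [lt_div_iff₀ hM] at h
    linarith
  calc sheathFunction M χ ≤ M ^ 2 * (s - 1) - χ + χ ^ 2 / 2 := by
        unfold sheathFunction; linarith [exp_neg_le_one_sub_add_sq_div_two hχ.le]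
    _ = M ^ 2 * (s - 1) ^ 2 / 8 * ((M * (s + 1)) ^ 2 - 4) := by rw [hχs]; ring
    _ < 0 := by
        apply mul_neg_of_pos_of_neg (by positivity)
        nlinarith [mul_pos hM (by linarith : (0:ℝ) < s + 1)]

/-- Bohm sheath criterion: with
`g_M(χ) = M²(√(1 + 2χ/M²) − 1) + e^{−χ} − 1`, (i) if `M ≥ 1` then `g_M ≥ 0` on `[0,∞)`;
(ii) conversely, if `g_M ≥ 0` on some interval `(0, δ)` with `δ > 0`, then `M ≥ 1`. -/
theorem bohm_sheath_criterion (M : ℝ) (hM : 0 < M) :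
    (1 ≤ M → ∀ χ : ℝ, 0 ≤ χ →
      0 ≤ M ^ 2 * (Real.sqrt (1 + 2 * χ / M ^ 2) - 1) + Real.exp (-χ) - 1) ∧
    ((∃ δ > 0, ∀ χ ∈ Set.Ioo (0 : ℝ) δ,
        0 ≤ M ^ 2 * (Real.sqrt (1 + 2 * χ / M ^ 2) - 1) + Real.exp (-χ) - 1) → 1 ≤ M) := by
  refine ⟨fun h1M χ hχ => sheathFunction_nonneg h1M hχ, ?_⟩
  rintro ⟨δ, hδ, hg⟩
  by_contra! hM1
  set χ := min (δ / 2) (1 - M)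
  have hχ : 0 < χ := lt_min (by linarith) (by linarith)
  have hχδ : χ < δ := (min_le_left _ _).trans_lt (by linarith)
  have hχM : χ < 2 * (1 - M) := (min_le_right _ _).trans_lt (by linarith)
  exact (sheathFunction_neg hM hχ hχM).not_ge (hg χ ⟨hχ, hχδ⟩)
end
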